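/- arXiv:2103.09715 — 7 statements merged into one kernel-verified Lean document; each statement's English description precedes it below -/
import Mathlib

section
/- Let (T,χ,L) be a tree H-decomposition of a graph G and let L* ⊆ L be a set of base vertices such that G[L*] is connected. Then there is a unique node t of T with L* ⊆ χ(t), no vertex of L* occurs in any other bag, and N_G(L*) \ L ⊆ χ(t) \ L. -/
/-!
A base vertex lies in exactly one bag, so every edge at a base vertex `u` is covered by the
bag of `u`. Along paths of `G[L*]` the bag of one vertex of `L*` therefore absorbs all of `L*`,
and then every neighbour of `L*` as well.
-/

/-- A class of graphs: a predicate on simple graphs over every vertex type. -/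
def GraphClass : Type 1 := ∀ (V : Type), SimpleGraph V → Prop

/-- The open neighborhood of a vertex set `S`: all vertices outside `S` that are
adjacent to some vertex of `S`. -/
def setNbhd {V : Type} (G : SimpleGraph V) (S : Set V) : Set V :=
  {v : V | v ∉ S ∧ ∃ u ∈ S, G.Adj u v}

/-- A tree decomposition of a graph `G`. -/
structure TreeDecomp {V : Type} (G : SimpleGraph V) (T : Type) (Tg : SimpleGraph T) : Type where
  bag : T → Set V
  isTree : Tg.Connected ∧ Tg.IsAcyclic
  bags_cover : ∀ v : V, ∃ t : T, v ∈ bag t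
  edges_covered : ∀ ⦃u v : V⦄, G.Adj u v → ∃ t : T, u ∈ bag t ∧ v ∈ bag t
  bags_connected : ∀ v : V, (Tg.induce {t : T | v ∈ bag t}).Connected

/-- A tree `H`-decomposition. -/
structure THDecomp (H : GraphClass) {V : Type} (G : SimpleGraph V) (T : Type)
    (Tg : SimpleGraph T) extends TreeDecomp G T Tg : Type where
  base : Set V
  base_unique : ∀ v ∈ base, ∃! t : T, v ∈ bag t
  base_leaf : ∀ v ∈ base, ∀ t : T, v ∈ bag t → (Tg.neighborSet t).Subsingleton
  base_in_H : ∀ t : T, H _ (G.induce (bag t ∩ base))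

theorem SimpleGraph.Reachable.mem_of_adj_mem {V : Type*} {G : SimpleGraph V} {s : Set V}
    (hs : ∀ ⦃u v⦄, G.Adj u v → u ∈ s → v ∈ s) {u v : V} (h : G.Reachable u v) (hu : u ∈ s) :
    v ∈ s := by
  obtain ⟨p⟩ := h
  induction p with
  | nil => exact hu
  | cons hadj _ ih => exact ih (hs hadj hu)

namespace THDecomp

variable {H : GraphClass} {V : Type} {G : SimpleGraph V} {T : Type} {Tg : SimpleGraph T}
  (D : THDecomp H G T Tg)

theorem eq_of_mem_bag_of_mem_base {v : V} (hv : v ∈ D.base) {s s' : T} (hs : v ∈ D.bag s)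
    (hs' : v ∈ D.bag s') : s = s' :=
  (D.base_unique v hv).unique hs hs'

theorem mem_bag_of_adj {u w : V} {t : T} (hu : u ∈ D.base) (hut : u ∈ D.bag t)
    (hadj : G.Adj u w) : w ∈ D.bag t := by
  obtain ⟨s, hus, hws⟩ := D.edges_covered hadj
  rwa [D.eq_of_mem_bag_of_mem_base hu hus hut] at hws

theorem subset_bag_of_preconnected {S : Set V} (hS : S ⊆ D.base)
    (hconn : (G.induce S).Preconnected) {v : V} (hv : v ∈ S) {t : T} (hvt : v ∈ D.bag t) :
    S ⊆ D.bag t := fun w hw =>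
  (hconn ⟨v, hv⟩ ⟨w, hw⟩).mem_of_adj_mem (s := {x : S | x.1 ∈ D.bag t})
    (fun x _ hxy hx => D.mem_bag_of_adj (hS x.2) hx hxy) hvt

end THDecomp

/-- Let `(T, χ, L)` be a tree `H`-decomposition of a graph `G` and let `L* ⊆ L` be a set of
base vertices such that `G[L*]` is connected. Then there is a unique node `t` with
`L* ⊆ χ(t)`, no vertex of `L*` occurs in any other bag, and `N_G(L*) \ L ⊆ χ(t) \ L`. -/
theorem connected_base_set_in_unique_bag (H : GraphClass) {V : Type} (G : SimpleGraph V)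
    (T : Type) (Tg : SimpleGraph T) (D : THDecomp H G T Tg)
    (Lstar : Set V) (hsub : Lstar ⊆ D.base) (hconn : (G.induce Lstar).Connected) :
    ∃ t : T, Lstar ⊆ D.bag t ∧
      (∀ t' : T, (∃ v ∈ Lstar, v ∈ D.bag t') → t' = t) ∧
      setNbhd G Lstar \ D.base ⊆ D.bag t \ D.base := by
  obtain ⟨⟨v, hv⟩⟩ := hconn.nonempty
  obtain ⟨t, hvt⟩ := D.bags_cover v
  have hLt : Lstar ⊆ D.bag t := D.subset_bag_of_preconnected hsub hconn.preconnected hv hvt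
  refine ⟨t, hLt, ?_, ?_⟩
  · rintro t' ⟨u, hu, hut'⟩
    exact D.eq_of_mem_bag_of_mem_base (hsub hu) hut' (hLt hu)
  · rintro w ⟨⟨-, u, hu, hadj⟩, hwL⟩
    exact ⟨D.mem_bag_of_adj (hsub hu) (hLt hu) hadj, hwL⟩
end

section
/- Let G be a graph, let X, Y ⊆ V(G) be disjoint vertex sets, and let S be an (X,Y)-separator. Then there is an important (X,Y)-separator S′ with |S′| ≤ |S| such that the set of vertices reachable from X in G − S is contained in the set of vertices reachable from X in G − S′, and S′ equals the neighborhood of the latter reachability set. -/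
/-- `reachSet G S X` is the set of vertices reachable from `X \ S` in `G - S`. -/
def reachSet {V : Type} (G : SimpleGraph V) (S X : Set V) : Set V :=
  {v : V | ∃ (hv : v ∉ S) (u : V) (_ : u ∈ X) (hu : u ∉ S),
    (G.induce {x : V | x ∉ S}).Reachable ⟨u, hu⟩ ⟨v, hv⟩}

/-- `S` is an `(X,Y)`-separator: `S` is disjoint from `X ∪ Y` and `G - S` contains no
path from a vertex of `X` to a vertex of `Y`. -/
def IsSeparator {V : Type} (G : SimpleGraph V) (X Y S : Set V) : Prop :=
  Disjoint S (X ∪ Y) ∧ ∀ y ∈ Y, y ∉ reachSet G S X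

/-- `S` is an important `(X,Y)`-separator: it is an inclusion-wise minimal
`(X,Y)`-separator and there is no `(X,Y)`-separator `S'` with `|S'| ≤ |S|` whose
reachability set from `X` strictly contains that of `S`. -/
def IsImportantSeparator {V : Type} (G : SimpleGraph V) (X Y S : Set V) : Prop :=
  IsSeparator G X Y S ∧ (∀ S' : Set V, S' ⊂ S → ¬ IsSeparator G X Y S') ∧
    ¬ ∃ S' : Set V, IsSeparator G X Y S' ∧ S'.ncard ≤ S.ncard ∧
      reachSet G S X ⊂ reachSet G S' X

/-!
Among the `(X,Y)`-separators `T` with `|T| ≤ |S|` and `R_S(X) ⊆ R_T(X)` (finitely many, `S` among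
them) choose one whose reachability set `R = R_T(X)` is inclusion-maximal, and pass to
`T₀ = N(R) ⊆ T`. Every vertex adjacent to `R` but outside `T` is in `R`, so `T₀` still cuts `R`
off and `R_{T₀}(X) = R`; hence `T₀` is an `(X,Y)`-separator, no larger than `S`, and by maximality
important. It is inclusion-minimal because dropping any `v ∈ T₀ = N(R)` makes `v` reachable,
strictly enlarging the reachability set without enlarging the separator.
-/

section

open SimpleGraph

variable {V : Type} {G : SimpleGraph V} {X Y S T : Set V}

lemma reachSet_anti (h : S ⊆ T) : reachSet G T X ⊆ reachSet G S X := by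
  rintro v ⟨hv, u, huX, hu, hr⟩
  have hle : {x : V | x ∉ T} ≤ {x : V | x ∉ S} := fun x hx hxS => hx (h hxS)
  exact ⟨fun hvS => hv (h hvS), u, huX, fun huS => hu (h huS),
    hr.map (G.induceHomOfLE hle).toHom⟩

lemma mem_reachSet_of_mem {u : V} (huX : u ∈ X) (hu : u ∉ S) : u ∈ reachSet G S X :=
  ⟨hu, u, huX, hu, Reachable.refl _⟩

lemma mem_reachSet_of_adj {u v : V} (hu : u ∈ reachSet G S X) (hadj : G.Adj u v) (hv : v ∉ S) :
    v ∈ reachSet G S X := by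
  obtain ⟨_, w, hwX, hw, hr⟩ := hu
  exact ⟨hv, w, hwX, hw, hr.trans (Adj.reachable (by simpa using hadj))⟩

lemma setNbhd_reachSet_subset : setNbhd G (reachSet G S X) ⊆ S := by
  rintro v ⟨hv, u, hu, hadj⟩
  by_contra hvS
  exact hv (mem_reachSet_of_adj hu hadj hvS)

lemma reachSet_setNbhd_reachSet (hXS : Disjoint X S) :
    reachSet G (setNbhd G (reachSet G S X)) X = reachSet G S X := by
  refine Set.Subset.antisymm ?_ (reachSet_anti setNbhd_reachSet_subset)
  rintro v ⟨_, u, huX, _, ⟨p⟩⟩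
  -- A walk avoiding `N(R)` that starts in `R` cannot leave `R`.
  suffices h : ∀ {a b : {x : V | x ∉ setNbhd G (reachSet G S X)}},
      (G.induce _).Walk a b → a.1 ∈ reachSet G S X → b.1 ∈ reachSet G S X from
    h p (mem_reachSet_of_mem huX (hXS.notMem_of_mem_left huX))
  intro a b q
  induction q with
  | nil => exact id
  | @cons c d _ hadj _ ih =>
    intro hc
    have hadj' : G.Adj c.1 d.1 := by simpa using hadj
    refine ih (mem_reachSet_of_adj hc hadj' fun hdS => d.2 ⟨?_, c.1, hc, hadj'⟩)
    exact fun hd => hd.1 hdS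

lemma IsSeparator.disjoint_left (hS : IsSeparator G X Y S) : Disjoint X S :=
  (hS.1.mono_right Set.subset_union_left).symm

lemma IsSeparator.setNbhd_reachSet (hS : IsSeparator G X Y S) :
    IsSeparator G X Y (setNbhd G (reachSet G S X)) := by
  refine ⟨hS.1.mono_left setNbhd_reachSet_subset, fun y hy => ?_⟩
  rw [reachSet_setNbhd_reachSet hS.disjoint_left]
  exact hS.2 y hy

lemma reachSet_ssubset_of_ssubset_setNbhd {S' : Set V} (hS' : S' ⊂ S)
    (hS : S ⊆ setNbhd G (reachSet G S X)) : reachSet G S X ⊂ reachSet G S' X := by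
  obtain ⟨v, hvS, hvS'⟩ := Set.exists_of_ssubset hS'
  obtain ⟨hvR, u, huR, hadj⟩ := hS hvS
  have hv : v ∈ reachSet G S' X := mem_reachSet_of_adj (reachSet_anti hS'.subset huR) hadj hvS'
  exact ssubset_of_subset_not_subset (reachSet_anti hS'.subset) fun h => hvR (h hv)

lemma isImportantSeparator_of_maximal (hS : IsSeparator G X Y S)
    (hSN : S ⊆ setNbhd G (reachSet G S X))
    (hmax : ∀ S' : Set V, IsSeparator G X Y S' → S'.ncard ≤ S.ncard →
      ¬ reachSet G S X ⊂ reachSet G S' X)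
    (hfin : S.Finite) : IsImportantSeparator G X Y S := by
  refine ⟨hS, fun S' hS' hsep => ?_, fun ⟨S', hsep, hcard, hss⟩ => hmax S' hsep hcard hss⟩
  exact hmax S' hsep (Set.ncard_le_ncard hS'.subset hfin)
    (reachSet_ssubset_of_ssubset_setNbhd hS' hSN)

end

theorem exists_important_separator_general {V : Type} [Fintype V] (G : SimpleGraph V)
    (X Y S : Set V) (hS : IsSeparator G X Y S) :
    ∃ S' : Set V, IsImportantSeparator G X Y S' ∧ S'.ncard ≤ S.ncard ∧
      reachSet G S X ⊆ reachSet G S' X ∧ S' = setNbhd G (reachSet G S' X) := by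
  let F : Set (Set V) :=
    {T | IsSeparator G X Y T ∧ T.ncard ≤ S.ncard ∧ reachSet G S X ⊆ reachSet G T X}
  obtain ⟨T, ⟨hT, hTS, hST⟩, hTmax⟩ :=
    F.toFinite.exists_maximalFor (reachSet G · X) F ⟨S, hS, le_rfl, subset_rfl⟩
  have hreach := reachSet_setNbhd_reachSet (G := G) hT.disjoint_left
  set T₀ := setNbhd G (reachSet G T X)
  have hT₀T : T₀.ncard ≤ T.ncard := Set.ncard_le_ncard setNbhd_reachSet_subset T.toFinite
  refine ⟨T₀, ?_, hT₀T.trans hTS, hreach ▸ hST, by rw [hreach]⟩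
  refine isImportantSeparator_of_maximal hT.setNbhd_reachSet (by rw [hreach]) ?_ T₀.toFinite
  rw [hreach]
  intro S' hS' hcard hss
  have hS'F : S' ∈ F := ⟨hS', hcard.trans (hT₀T.trans hTS), hST.trans hss.subset⟩
  exact hss.not_subset (hTmax hS'F hss.subset)

/-- For any `(X,Y)`-separator `S` there is an important `(X,Y)`-separator `S'` with
`|S'| ≤ |S|` such that `R_S(X) ⊆ R_{S'}(X)` and `S' = N_G(R_{S'}(X))`. -/
theorem exists_important_separator {V : Type} [Fintype V] (G : SimpleGraph V)
    (X Y S : Set V) (hXY : Disjoint X Y) (hS : IsSeparator G X Y S) :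
    ∃ S' : Set V, IsImportantSeparator G X Y S' ∧ S'.ncard ≤ S.ncard ∧
      reachSet G S X ⊆ reachSet G S' X ∧ S' = setNbhd G (reachSet G S' X) :=
  exists_important_separator_general G X Y S hS
end

section
/- If v is a simplicial vertex of a graph G, then G is chordal if and only if G − v is chordal. -/
/-- A graph is chordal if it contains no hole, i.e. no induced cycle of length at least
four: there is no graph embedding of the `n`-cycle for any `n ≥ 4`. -/
def IsChordal {α : Type} (G : SimpleGraph α) : Prop :=
  ∀ n : ℕ, 4 ≤ n → IsEmpty (SimpleGraph.cycleGraph n ↪g G)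

/-!
Holes of `G - v` are holes of `G`. Conversely, a hole of `G` cannot pass through `v`: the two
neighbours of `v` on the hole would be adjacent, as `N(v)` is a clique, giving the hole a chord.
So every hole of `G` is a hole of `G - v`.
-/

namespace SimpleGraph

variable {V W : Type*} {G : SimpleGraph V} {H : SimpleGraph W}

def Embedding.codRestrict (f : H ↪g G) (s : Set V) (hs : ∀ w, f w ∈ s) : H ↪g G.induce s where
  toFun w := ⟨f w, hs w⟩
  inj' _ _ h := f.injective (congrArg Subtype.val h)
  map_rel_iff' := f.map_adj_iff

theorem Embedding.apply_ne_of_isClique_neighborSet (f : H ↪g G) {v : V}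
    (hv : G.IsClique (G.neighborSet v)) {w : W} (hw : ¬H.IsClique (H.neighborSet w)) :
    f w ≠ v := by
  rintro rfl
  refine hw fun a ha b hb hab => f.map_adj_iff.1 ?_
  exact hv (f.map_adj_iff.2 ha) (f.map_adj_iff.2 hb) (f.injective.ne hab)

theorem cycleGraph_not_isClique_neighborSet {n : ℕ} (hn : 4 ≤ n) (i : Fin n) :
    ¬(cycleGraph n).IsClique ((cycleGraph n).neighborSet i) := by
  obtain ⟨m, rfl⟩ := Nat.exists_eq_add_of_le' hn
  have two_eq : (i + 1) - (i - 1) = 2 := by rw [add_sub_sub_cancel]; rfl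
  have neg_two_eq : (i - 1) - (i + 1) = -2 := by rw [← neg_sub, two_eq]
  rw [cycleGraph_neighborSet, isClique_pair, cycleGraph_adj, Classical.not_imp, two_eq, neg_two_eq]
  refine ⟨fun h => ?_, ?_⟩
  · have : (2 : Fin (m + 4)) = 0 := by rw [← two_eq, h, sub_self]
    simp [Fin.ext_iff, Nat.mod_eq_of_lt] at this
  · simp [Fin.ext_iff, Fin.val_neg, Nat.mod_eq_of_lt]

end SimpleGraph

theorem IsChordal.of_embedding {α β : Type} {G : SimpleGraph α} {H : SimpleGraph β}
    (f : H ↪g G) (hG : IsChordal G) : IsChordal H :=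
  fun n hn => ⟨fun g => (hG n hn).false (f.comp g)⟩

/-- If `v` is a simplicial vertex of a graph `G` (its open neighborhood is a clique),
then `G` is chordal if and only if `G - v` is chordal. -/
theorem chordal_iff_delete_simplicial {α : Type} (G : SimpleGraph α) (v : α)
    (hv : G.IsClique (G.neighborSet v)) :
    IsChordal G ↔ IsChordal (G.induce {x : α | x ≠ v}) := by
  refine ⟨IsChordal.of_embedding (SimpleGraph.Embedding.induce _), fun h n hn => ⟨fun f => ?_⟩⟩
  have avoids_v (i : Fin n) : f i ≠ v :=
    f.apply_ne_of_isClique_neighborSet hv (SimpleGraph.cycleGraph_not_isClique_neighborSet hn i)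
  exact (h n hn).false (f.codRestrict _ avoids_v)
end

section
/- If G is a chordal graph whose vertex set is partitioned into sets A and B such that B is an independent set in G and no vertex of B is simplicial in G, then |B| < |A|. -/
theorem Set.ncard_preimage_val {V : Type*} (s t : Set V) :
    ((Subtype.val : s → V) ⁻¹' t).ncard = (s ∩ t).ncard := by
  rw [← Subtype.preimage_coe_inter_self s t, Set.inter_comm,
    Set.ncard_preimage_of_injective_subset_range Subtype.val_injective (by simp)]

namespace SimpleGraph

theorem cycleGraph_adj_iff_val {n : ℕ} (hn : 2 ≤ n) {i j : Fin n} :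
    (cycleGraph n).Adj i j ↔ i.val + 1 = j.val ∨ j.val + 1 = i.val ∨
      (i.val + 1 = n ∧ j.val = 0) ∨ (j.val + 1 = n ∧ i.val = 0) := by
  have key : ∀ a b : Fin n,
      (a - b).val = 1 ↔ a.val = b.val + 1 ∨ (a.val = 0 ∧ b.val + 1 = n) := by
    intro a b
    simp only [Fin.sub_def]
    rcases le_or_gt b.val a.val with h | h
    · rw [show n - b.val + a.val = a.val - b.val + n by omega, Nat.add_mod_right,
        Nat.mod_eq_of_lt (by omega)]
      omega
    · rw [Nat.mod_eq_of_lt (by omega)]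
      omega
  rw [cycleGraph_adj', key, key]
  omega

namespace Walk

variable {V : Type*} {G : SimpleGraph V} {u v w : V}

theorem adj_getVert_of_cycleGraph_adj {c : G.Walk u u} {i j : Fin c.length}
    (h : (cycleGraph c.length).Adj i j) : G.Adj (c.getVert i) (c.getVert j) := by
  have hn : 2 ≤ c.length := by
    by_contra! hn
    have := (cycleGraph_adj'.mp h)
    have := (i - j).isLt
    have := (j - i).isLt
    omega
  have hsucc : ∀ i j : Fin c.length, i.val + 1 = j.val → G.Adj (c.getVert i) (c.getVert j) :=
    fun i j h => h ▸ c.adj_getVert_succ i.isLt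
  have hlast : ∀ i j : Fin c.length, i.val + 1 = c.length → j.val = 0 →
      G.Adj (c.getVert i) (c.getVert j) := by
    intro i j hi hj
    simpa [hi, hj] using c.adj_getVert_succ i.isLt
  rcases (cycleGraph_adj_iff_val hn).mp h with h | h | ⟨h1, h2⟩ | ⟨h1, h2⟩
  · exact hsucc i j h
  · exact (hsucc j i h).symm
  · exact hlast i j h1 h2
  · exact (hlast j i h1 h2).symm

theorem IsCycle.cycleGraph_adj_of_mk_mem_edges {c : G.Walk u u} (hc : c.IsCycle)
    {i j : Fin c.length} (h : s(c.getVert i, c.getVert j) ∈ c.edges) :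
    (cycleGraph c.length).Adj i j := by
  have hinj : ∀ i j : ℕ, i < c.length → j < c.length → c.getVert i = c.getVert j → i = j :=
    fun i j hi hj h => hc.getVert_injOn' (by simp; omega) (by simp; omega) h
  obtain ⟨k, hk, he⟩ := c.mk_mem_edges_iff_exists.mp h
  -- The index `k + 1` is read modulo the length of the cycle.
  obtain ⟨k', hk', hkk', hvert⟩ : ∃ k' < c.length, (k' = k + 1 ∨ k + 1 = c.length ∧ k' = 0) ∧
      c.getVert (k + 1) = c.getVert k' := by
    rcases Nat.lt_or_ge (k + 1) c.length with h | h
    · exact ⟨k + 1, h, .inl rfl, rfl⟩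
    · exact ⟨0, by omega, .inr ⟨by omega, rfl⟩, by simp [show k + 1 = c.length by omega]⟩
  rw [hvert, Sym2.eq_iff] at he
  rw [cycleGraph_adj_iff_val (by have := hc.three_le_length; omega)]
  rcases he with ⟨h1, h2⟩ | ⟨h1, h2⟩
  · have := hinj _ _ hk i.isLt h1
    have := hinj _ _ hk' j.isLt h2
    omega
  · have := hinj _ _ hk j.isLt h1
    have := hinj _ _ hk' i.isLt h2
    omega

theorem IsPath.start_notMem_support_tail {p : G.Walk u v} (hp : p.IsPath) :
    u ∉ p.support.tail := by
  have := hp.support_nodup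
  rw [← cons_tail_support] at this
  exact (List.nodup_cons.mp this).1

theorem two_le_length_of_not_adj (huv : u ≠ v) (hadj : ¬G.Adj u v) (p : G.Walk u v) :
    2 ≤ p.length := by
  rcases p with _ | ⟨h, _ | _⟩
  · exact absurd rfl huv
  · exact absurd h hadj
  · simp

theorem IsChordless.reverse {p : G.Walk u v} (hp : p.IsChordless) : p.reverse.IsChordless := by
  rw [isChordless_iff_forall_mem_edges] at hp ⊢
  intro x y hx hy hadj
  simpa using hp (by simpa using hx) (by simpa using hy) hadj

theorem IsChordless.append {p : G.Walk u v} {q : G.Walk v w} (hp : p.IsChordless)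
    (hq : q.IsChordless)
    (hpq : ∀ x ∈ p.support, ∀ y ∈ q.support, G.Adj x y → x ∈ q.support ∨ y ∈ p.support) :
    (p.append q).IsChordless := by
  have across : ∀ x ∈ p.support, ∀ y ∈ q.support, G.Adj x y → s(x, y) ∈ (p.append q).edges := by
    intro x hx y hy hadj
    rw [edges_append, List.mem_append]
    rcases hpq x hx y hy hadj with hxq | hyp
    · exact .inr (hq.mem_edges hxq hy hadj)
    · exact .inl (hp.mem_edges hx hyp hadj)
  rw [isChordless_iff_forall_mem_edges]
  intro x y hx hy hadj
  rw [mem_support_append_iff] at hx hy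
  rcases hx with hx | hx <;> rcases hy with hy | hy
  · exact edges_append p q ▸ List.mem_append_left _ (hp.mem_edges hx hy hadj)
  · exact across x hx y hy hadj
  · exact Sym2.eq_swap ▸ across y hy x hx hadj.symm
  · exact edges_append p q ▸ List.mem_append_right _ (hq.mem_edges hx hy hadj)

theorem isChordless_of_forall_support_subset_length_le {p : G.Walk u v}
    (hmin : ∀ q : G.Walk u v, q.support ⊆ p.support → p.length ≤ q.length) :
    p.IsChordless := by
  rw [isChordless_iff_forall_mem_edges]
  intro x y hx hy hadj
  obtain ⟨i, rfl, hi⟩ := mem_support_iff_exists_getVert.mp hx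
  obtain ⟨j, rfl, hj⟩ := mem_support_iff_exists_getVert.mp hy
  clear hx hy
  wlog hij : i < j generalizing i j
  · rw [Sym2.eq_swap]
    refine this j hj i hi hadj.symm (lt_of_le_of_ne (not_lt.mp hij) ?_)
    rintro rfl
    exact hadj.ne rfl
  rw [mk_mem_edges_iff_exists]
  by_contra hnot
  have hgap : i + 2 ≤ j := by
    by_contra h
    exact hnot ⟨i, by omega, by rw [show j = i + 1 by omega]⟩
  -- Jumping along the edge from the `i`-th to the `j`-th vertex shortens `p`.
  let q : G.Walk u v := (p.take i).append (cons hadj (p.drop j))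
  have hsub : q.support ⊆ p.support := by
    intro z hz
    simp only [q, mem_support_append_iff, support_cons, List.mem_cons] at hz
    rcases hz with hz | rfl | hz
    · exact (p.isSubwalk_take i).support_subset hz
    · exact p.getVert_mem_support i
    · exact (p.isSubwalk_drop j).support_subset hz
  have := hmin q hsub
  simp only [q, length_append, length_cons, take_length, drop_length] at this
  omega

theorem exists_isPath_isChordless_support_subset (p : G.Walk u v) :
    ∃ q : G.Walk u v, q.IsPath ∧ q.IsChordless ∧ q.support ⊆ p.support := by
  classical
  have hex : ∃ n, ∃ q : G.Walk u v, q.support ⊆ p.support ∧ q.length = n :=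
    ⟨_, p, List.Subset.refl _, rfl⟩
  obtain ⟨q, hqp, hqlen⟩ := Nat.find_spec hex
  have hsub : q.bypass.support ⊆ p.support :=
    List.Subset.trans q.support_bypass_subset_support hqp
  refine ⟨q.bypass, q.bypass_isPath,
    isChordless_of_forall_support_subset_length_le fun r hr => ?_, hsub⟩
  calc q.bypass.length ≤ q.length := q.length_bypass_le_length
    _ = Nat.find hex := hqlen
    _ ≤ r.length := Nat.find_min' hex ⟨r, List.Subset.trans hr hsub, rfl⟩

end Walk

variable {V : Type*} {G : SimpleGraph V}

def IsSimplicial (G : SimpleGraph V) (v : V) : Prop :=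
  G.IsClique (G.neighborSet v)

theorem isSimplicial_induce_iff {s : Set V} {x : s} :
    (G.induce s).IsSimplicial x ↔ G.IsClique (s ∩ G.neighborSet x) := by
  rw [IsSimplicial, isClique_induce_iff, neighborSet_induce, Subtype.image_preimage_coe]

theorem isSimplicial_of_isSimplicial_induce {U : Set V} {w : U} (hN : G.neighborSet w ⊆ U)
    (hw : (G.induce U).IsSimplicial w) : G.IsSimplicial w := by
  rwa [isSimplicial_induce_iff, Set.inter_eq_right.mpr hN] at hw

theorem exists_isSimplicial_notMem_of_isClique
    (h : G = ⊤ ∨ ∃ x y, x ≠ y ∧ ¬G.Adj x y ∧ G.IsSimplicial x ∧ G.IsSimplicial y)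
    {K : Set V} (hK : G.IsClique K) {a : V} (ha : a ∉ K) : ∃ w ∉ K, G.IsSimplicial w := by
  rcases h with rfl | ⟨x, y, hxy, hnadj, hx, hy⟩
  · exact ⟨a, ha, fun x _ y _ hxy => (top_adj x y).mpr hxy⟩
  · by_cases hxK : x ∈ K
    · exact ⟨y, fun hyK => hnadj (hK hxK hyK hxy), hy⟩
    · exact ⟨x, hxK, hx⟩

def ReachableAvoiding (G : SimpleGraph V) (S : Set V) (u v : V) : Prop :=
  ∃ p : G.Walk u v, ∀ x ∈ p.support, x ∉ S

namespace ReachableAvoiding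

variable {S : Set V} {u v w : V}

theorem refl (hu : u ∉ S) : G.ReachableAvoiding S u u := ⟨Walk.nil, by simpa using hu⟩

theorem symm (h : G.ReachableAvoiding S u v) : G.ReachableAvoiding S v u := by
  obtain ⟨p, hp⟩ := h
  exact ⟨p.reverse, by simpa using hp⟩

theorem trans (h₁ : G.ReachableAvoiding S u v) (h₂ : G.ReachableAvoiding S v w) :
    G.ReachableAvoiding S u w := by
  obtain ⟨p, hp⟩ := h₁
  obtain ⟨q, hq⟩ := h₂
  refine ⟨p.append q, fun x hx => ?_⟩
  rcases Walk.mem_support_append_iff p q |>.mp hx with hx | hx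
  exacts [hp x hx, hq x hx]

theorem notMem_right (h : G.ReachableAvoiding S u v) : v ∉ S := by
  obtain ⟨p, hp⟩ := h
  exact hp v p.end_mem_support

theorem step (h : G.ReachableAvoiding S u v) (hadj : G.Adj v w) (hw : w ∉ S) :
    G.ReachableAvoiding S u w :=
  h.trans ⟨hadj.toWalk, by simp [h.notMem_right, hw]⟩

theorem neighborSet_subset (h : G.ReachableAvoiding S u v) :
    G.neighborSet v ⊆ {x | G.ReachableAvoiding S u x} ∪ S := fun w hw =>
  (em (w ∈ S)).elim .inr fun hwS => .inl (h.step hw hwS)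

theorem of_mem_support {p : G.Walk u v} (hp : ∀ x ∈ p.support, x ∉ S) (hw : w ∈ p.support) :
    G.ReachableAvoiding S u w := by
  classical
  exact ⟨p.takeUntil w hw, fun x hx => hp x (p.support_takeUntil_subset_support hw hx)⟩

end ReachableAvoiding

def Separates (G : SimpleGraph V) (S : Set V) (a b : V) : Prop :=
  a ∉ S ∧ b ∉ S ∧ ¬G.ReachableAvoiding S a b

variable {S : Set V} {a b s t : V}

theorem separates_comm : G.Separates S a b ↔ G.Separates S b a := by
  unfold Separates
  exact ⟨fun ⟨ha, hb, h⟩ => ⟨hb, ha, fun h' => h h'.symm⟩,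
    fun ⟨hb, ha, h⟩ => ⟨ha, hb, fun h' => h h'.symm⟩⟩

theorem separates_compl_pair (hab : a ≠ b) (hadj : ¬G.Adj a b) : G.Separates {a, b}ᶜ a b := by
  refine ⟨by simp, by simp, fun ⟨p, hp⟩ => ?_⟩
  have hnil : ¬p.Nil := fun h => hab h.eq
  have hsnd := hp p.snd (p.getVert_mem_support 1)
  simp only [Set.mem_compl_iff, Set.mem_insert_iff, Set.mem_singleton_iff, not_or] at hsnd
  exact hsnd ⟨(p.adj_snd hnil).ne', fun h => hadj (h ▸ p.adj_snd hnil)⟩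

theorem exists_adj_of_minimal_separates (hS : Minimal (G.Separates · a b) S) (hs : s ∈ S) :
    ∃ x, G.ReachableAvoiding S a x ∧ G.Adj x s := by
  obtain ⟨haS, hbS, hsep⟩ := hS.prop
  have hconn : G.ReachableAvoiding (S \ {s}) a b := by
    by_contra h
    exact hS.not_prop_of_ssubset (Set.sdiff_singleton_ssubset.mpr hs)
      ⟨fun h => haS h.1, fun h => hbS h.1, h⟩
  obtain ⟨p, hp⟩ := hconn
  obtain ⟨d, hd, hda, hdb⟩ :=
    p.exists_boundary_dart {x | G.ReachableAvoiding S a x} (.refl haS) hsep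
  replace hda : G.ReachableAvoiding S a d.fst := hda
  have hds : d.snd = s := by
    by_contra hne
    exact hdb (hda.step d.adj fun h => hp _ (p.dart_snd_mem_support_of_mem_darts hd) ⟨h, hne⟩)
  exact ⟨d.fst, hda, hds ▸ d.adj⟩

theorem exists_isChordless_path_of_minimal_separates (hS : Minimal (G.Separates · a b) S)
    (hs : s ∈ S) (ht : t ∈ S) :
    ∃ p : G.Walk s t, p.IsPath ∧ p.IsChordless ∧
      ∀ x ∈ p.support, x = s ∨ x = t ∨ G.ReachableAvoiding S a x := by
  obtain ⟨x, hx, hxs⟩ := exists_adj_of_minimal_separates hS hs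
  obtain ⟨y, hy, hyt⟩ := exists_adj_of_minimal_separates hS ht
  obtain ⟨w, hw⟩ := hx.symm.trans hy
  obtain ⟨p, hp, hpc, hsub⟩ :=
    (Walk.cons hxs.symm (w.concat hyt)).exists_isPath_isChordless_support_subset
  refine ⟨p, hp, hpc, fun z hz => ?_⟩
  have := hsub hz
  simp only [Walk.support_cons, Walk.support_concat, List.mem_cons, List.mem_append,
    List.not_mem_nil, or_false] at this
  rcases this with h | h | h
  · exact .inl h
  · exact .inr (.inr (hx.trans (.of_mem_support hw h)))
  · exact .inr (.inl h)

theorem IsClique.inter_isIndepSet_subsingleton {K I : Set V} (hK : G.IsClique K)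
    (hI : G.IsIndepSet I) : (K ∩ I).Subsingleton :=
  fun _ hx _ hy => by_contra fun hne => hI hx.2 hy.2 hne (hK hx.1 hy.1 hne)

theorem adj_of_isClique_neighborSet_sdiff {v x : V} (hx : ¬G.IsSimplicial x)
    (h : G.IsClique (G.neighborSet x \ {v})) : G.Adj v x := by
  by_contra hvx
  rw [Set.sdiff_singleton_eq_self fun h => hvx h.symm] at h
  exact hx h

theorem exists_mem_neighborSet_ne_of_not_isSimplicial {x : V} (hx : ¬G.IsSimplicial x) (v : V) :
    ∃ w ∈ G.neighborSet x, w ≠ v := by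
  by_contra! h
  exact hx fun y hy z hz hyz => absurd ((h y hy).trans (h z hz).symm) hyz

theorem isClique_neighborSet_sdiff_of_isSimplicial_induce {B s : Set V} {v : V}
    (hB : G.IsIndepSet B) (hs : Bᶜ \ {v} ⊆ s) {x : s} (hxB : x.val ∈ B)
    (hx : (G.induce s).IsSimplicial x) : G.IsClique (G.neighborSet x \ {v}) := by
  refine (isSimplicial_induce_iff.mp hx).subset fun y hy => ?_
  have hyB : y ∉ B := fun hyB => hB hxB hyB (G.ne_of_adj hy.1) hy.1
  exact ⟨hs ⟨hyB, hy.2⟩, hy.1⟩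

end SimpleGraph

open SimpleGraph

section Chordal

variable {V : Type} {G : SimpleGraph V} {S : Set V} {a b s t : V}

theorem IsChordal.induce (hG : IsChordal G) (U : Set V) : IsChordal (G.induce U) :=
  fun n hn => ⟨fun f => (hG n hn).elim' ((Embedding.induce U).comp f)⟩

theorem IsChordal.not_isChordless {c : G.Walk a a} (hG : IsChordal G) (hc : c.IsCycle)
    (hlen : 4 ≤ c.length) : ¬c.IsChordless := fun hchord =>
  (hG c.length hlen).elim
    { toFun := fun i => c.getVert i
      inj' := fun i j h => Fin.ext (hc.getVert_injOn' (by simp; omega) (by simp; omega) h)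
      map_rel_iff' := ⟨fun hadj => hc.cycleGraph_adj_of_mk_mem_edges
          (hchord.mem_edges (c.getVert_mem_support _) (c.getVert_mem_support _) hadj),
        Walk.adj_getVert_of_cycleGraph_adj⟩ }

theorem IsChordal.adj_of_isChordless_paths (hG : IsChordal G) (hst : s ≠ t) {p q : G.Walk s t}
    (hp : p.IsPath) (hq : q.IsPath) (hpc : p.IsChordless) (hqc : q.IsChordless)
    (hint : ∀ x ∈ p.support, ∀ y ∈ q.support, x ≠ s → x ≠ t → y ≠ s → y ≠ t →
      x ≠ y ∧ ¬G.Adj x y) :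
    G.Adj s t := by
  by_contra hadj
  have hlen := Walk.two_le_length_of_not_adj hst hadj
  have hdisj : p.support.tail.Disjoint q.reverse.support.tail := by
    intro x hxp hxq
    rcases eq_or_ne x s with rfl | hxs
    · exact hp.start_notMem_support_tail hxp
    rcases eq_or_ne x t with rfl | hxt
    · exact hq.reverse.start_notMem_support_tail hxq
    have hxq' : x ∈ q.support := by simpa using List.mem_of_mem_tail hxq
    exact (hint x (List.mem_of_mem_tail hxp) x hxq' hxs hxt hxs hxt).1 rfl
  have hcycle := hp.isCycle_append hq.reverse hdisj (.inl (hlen p))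
  refine hG.not_isChordless hcycle (by simp; linarith [hlen p, hlen q]) ?_
  refine hpc.append hqc.reverse fun x hx y hy hxy => ?_
  rw [Walk.support_reverse, List.mem_reverse] at hy ⊢
  by_contra! h
  have hxs : x ≠ s := fun hxs => h.1 (hxs ▸ q.start_mem_support)
  have hxt : x ≠ t := fun hxt => h.1 (hxt ▸ q.end_mem_support)
  have hys : y ≠ s := fun hys => h.2 (hys ▸ p.start_mem_support)
  have hyt : y ≠ t := fun hyt => h.2 (hyt ▸ p.end_mem_support)
  exact (hint x hx y hy hxs hxt hys hyt).2 hxy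

theorem IsChordal.isClique_of_minimal_separates (hG : IsChordal G)
    (hS : Minimal (G.Separates · a b) S) : G.IsClique S := by
  intro s hs t ht hst
  have hS' : Minimal (G.Separates · b a) S := by simpa only [separates_comm] using hS
  obtain ⟨p, hp, hpc, hpa⟩ := exists_isChordless_path_of_minimal_separates hS hs ht
  obtain ⟨q, hq, hqc, hqb⟩ := exists_isChordless_path_of_minimal_separates hS' hs ht
  refine hG.adj_of_isChordless_paths hst hp hq hpc hqc fun x hx y hy hxs hxt hys hyt => ?_
  have hxa := ((hpa x hx).resolve_left hxs).resolve_left hxt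
  have hyb := ((hqb y hy).resolve_left hys).resolve_left hyt
  have hsep := hS.prop.2.2
  exact ⟨by rintro rfl; exact hsep (hxa.trans hyb.symm),
    fun hxy => hsep ((hxa.step hxy hyb.notMem_right).trans hyb.symm)⟩

theorem IsChordal.eq_top_or_exists_isSimplicial [Finite V] (hG : IsChordal G) :
    G = ⊤ ∨ ∃ x y, x ≠ y ∧ ¬G.Adj x y ∧ G.IsSimplicial x ∧ G.IsSimplicial y := by
  induction hn : Nat.card V using Nat.strong_induction_on generalizing V with
  | _ n ih =>
  by_cases htop : G = ⊤
  · exact .inl htop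
  obtain ⟨a, b, hab, hadj⟩ : ∃ a b, a ≠ b ∧ ¬G.Adj a b := by
    contrapose! htop
    ext a b
    exact ⟨fun h => h.ne, htop a b⟩
  obtain ⟨S, hS⟩ := (Set.toFinite {S | G.Separates S a b}).exists_minimal
    ⟨_, separates_compl_pair hab hadj⟩
  replace hS : Minimal (G.Separates · a b) S := hS
  have hclique := hG.isClique_of_minimal_separates hS
  have hside : ∀ c d, Minimal (G.Separates · c d) S →
      ∃ w, G.ReachableAvoiding S c w ∧ G.IsSimplicial w := by
    intro c d hS
    obtain ⟨hcS, hdS, hsep⟩ := hS.prop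
    let U := {x | G.ReachableAvoiding S c x} ∪ S
    have hcard : Nat.card U < n := hn ▸ Finite.card_subtype_lt (x := d) (by
      rintro (h | h)
      exacts [hsep h, hdS h])
    obtain ⟨w, hwS, hw⟩ := exists_isSimplicial_notMem_of_isClique
      (ih _ hcard (hG.induce U) rfl) (K := Subtype.val ⁻¹' S)
      (isClique_induce_iff.mpr (hclique.subset (Set.image_preimage_subset _ _)))
      (a := ⟨c, .inl (.refl hcS)⟩) hcS
    have hwc : G.ReachableAvoiding S c w := w.2.resolve_right hwS
    exact ⟨w, hwc, isSimplicial_of_isSimplicial_induce hwc.neighborSet_subset hw⟩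
  obtain ⟨x, hax, hx⟩ := hside a b hS
  obtain ⟨y, hby, hy⟩ := hside b a (by simpa only [separates_comm] using hS)
  have hsep := hS.prop.2.2
  refine .inr ⟨x, y, ?_, fun hxy => hsep ?_, hx, hy⟩
  · rintro rfl
    exact hsep (hax.trans hby.symm)
  · exact (hax.step hxy hby.notMem_right).trans hby.symm

theorem IsChordal.exists_isSimplicial [Finite V] [Nonempty V] (hG : IsChordal G) :
    ∃ v, G.IsSimplicial v := by
  rcases hG.eq_top_or_exists_isSimplicial with rfl | ⟨x, -, -, -, hx, -⟩
  · exact ⟨Classical.arbitrary V, fun x _ y _ hxy => (top_adj x y).mpr hxy⟩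
  · exact ⟨x, hx⟩

theorem IsChordal.ncard_lt_ncard_compl [Finite V] [Nonempty V] (hG : IsChordal G) {B : Set V}
    (hB : G.IsIndepSet B) (hBs : ∀ v ∈ B, ¬G.IsSimplicial v) :
    B.ncard < Bᶜ.ncard := by
  induction hn : Nat.card V using Nat.strong_induction_on generalizing V with
  | _ n ih =>
  rcases B.eq_empty_or_nonempty with rfl | ⟨b, hb⟩
  · simp [Set.ncard_univ, Nat.card_pos]
  obtain ⟨v, hv⟩ := hG.exists_isSimplicial
  have hvB : v ∉ B := fun h => hBs v h hv
  -- Delete `v` together with the vertices of `B` that would become simplicial without `v`;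
  -- these are neighbours of `v`, so there is at most one of them.
  let D := {x ∈ B | G.IsClique (G.neighborSet x \ {v})}
  have hDB : D ⊆ B := Set.sep_subset _ _
  have hD : D.ncard ≤ 1 := Set.ncard_le_one_iff_subsingleton.mpr <|
    (hv.inter_isIndepSet_subsingleton hB).anti fun x hx =>
      ⟨adj_of_isClique_neighborSet_sdiff (hBs x hx.1) hx.2, hx.1⟩
  let s : Set V := ({v} ∪ D)ᶜ
  have hs : Bᶜ \ {v} ⊆ s := fun x ⟨hxB, hxv⟩ hx => hx.elim hxv fun hxD => hxB hxD.1
  have hcard : Nat.card s < n := hn ▸ Finite.card_subtype_lt (x := v) (by simp [s])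
  obtain ⟨w, hw, hwv⟩ := exists_mem_neighborSet_ne_of_not_isSimplicial (hBs b hb) v
  have : Nonempty s := ⟨⟨w, hs ⟨fun hwB => hB hb hwB (G.ne_of_adj hw) hw, hwv⟩⟩⟩
  have hrec := ih _ hcard (hG.induce s) (B := Subtype.val ⁻¹' B)
    (fun x hx y hy hxy => hB hx hy (Subtype.val_injective.ne hxy))
    (fun x hxB hx =>
      x.2 (.inr ⟨hxB, isClique_neighborSet_sdiff_of_isSimplicial_induce hB hs hxB hx⟩))
    rfl
  have hsB : s ∩ B = B \ D := by ext x; grind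
  have hsBc : s ∩ Bᶜ = Bᶜ \ {v} := by ext x; grind
  rw [← Set.preimage_compl, Set.ncard_preimage_val, Set.ncard_preimage_val, hsB, hsBc,
    Set.ncard_sdiff hDB, Set.ncard_sdiff_singleton_of_mem hvB] at hrec
  have := Set.ncard_le_ncard hDB
  omega

end Chordal

/-- If `G` is a chordal graph whose vertex set is partitioned into `A` and `B` such that
`B` is an independent set and no vertex of `B` is simplicial in `G` (and `A` is nonempty),
then `|B| < |A|`. -/
theorem nonsimplicial_independent_lt {α : Type} [Fintype α] (G : SimpleGraph α)
    (hG : IsChordal G) (A B : Set α)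
    (hcover : A ∪ B = Set.univ) (hdisj : Disjoint A B)
    (hBindep : ∀ u ∈ B, ∀ v ∈ B, ¬ G.Adj u v)
    (hBnotsimplicial : ∀ v ∈ B, ¬ G.IsClique (G.neighborSet v))
    (hA : A.Nonempty) :
    B.ncard < A.ncard := by
  have : Nonempty α := ⟨hA.some⟩
  obtain rfl : A = Bᶜ := IsCompl.eq_compl ⟨hdisj, codisjoint_iff.mpr hcover⟩
  exact hG.ncard_lt_ncard_compl (fun u hu v hv _ => hBindep u hu v hv) hBnotsimplicial
end

section
/- If a graph G contains a vertex v with two nonadjacent neighbors u1, u2 ∈ N_G(v), together with a walk from u1 to u2 all of whose internal vertices lie outside the closed neighborhood N_G[v], then G contains a hole (an induced cycle of length at least four) passing through v. -/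
/-!
The walk `w` shows that `u₁` and `u₂` are connected in the subgraph induced by `u₁`, `u₂` and
the vertices outside `N[v]`. A shortest `u₁`–`u₂` walk there is an induced path of `G`, since
every subwalk of a geodesic is a geodesic; its length is at least two because `u₁ ≠ u₂` are
nonadjacent. Among its vertices `v` sees only the two ends, so adding `v` closes a hole.
-/

namespace SimpleGraph

variable {V : Type*} {G : SimpleGraph V}

theorem cycleGraph_adj_iff_val_s9 {n : ℕ} {a b : Fin (n + 2)} :
    (cycleGraph (n + 2)).Adj a b ↔ a.val + 1 = b.val ∨ b.val + 1 = a.val ∨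
      (a.val = 0 ∧ b.val = n + 1) ∨ (b.val = 0 ∧ a.val = n + 1) := by
  have := a.isLt
  have := b.isLt
  rw [cycleGraph_adj']
  rcases lt_trichotomy a b with h | rfl | h
  · rw [Fin.coe_sub_iff_lt.2 h, Fin.sub_val_of_le h.le]
    omega
  · simp only [sub_self, Fin.val_zero]
    omega
  · rw [Fin.sub_val_of_le h.le, Fin.coe_sub_iff_lt.2 h]
    omega

theorem cycleGraph_adj_zero_succ {n : ℕ} {i : Fin (n + 1)} :
    (cycleGraph (n + 2)).Adj 0 i.succ ↔ i = 0 ∨ i = Fin.last n := by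
  rw [cycleGraph_adj_iff_val_s9, Fin.val_succ, Fin.val_zero, Fin.ext_iff, Fin.ext_iff, Fin.val_zero,
    Fin.val_last]
  omega

theorem cycleGraph_adj_succ_succ {n : ℕ} {i j : Fin (n + 1)} :
    (cycleGraph (n + 2)).Adj i.succ j.succ ↔ (pathGraph (n + 1)).Adj i j := by
  simp only [cycleGraph_adj_iff_val_s9, pathGraph_adj, Fin.val_succ]
  omega

theorem exists_cycleGraph_embedding_of_pathGraph {n : ℕ} (φ : pathGraph (n + 1) ↪g G) {v : V}
    (hv : v ∉ Set.range φ) (hadj : ∀ i, G.Adj v (φ i) ↔ i = 0 ∨ i = Fin.last n) :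
    ∃ f : cycleGraph (n + 2) ↪g G, f 0 = v := by
  have hinj : Function.Injective (Fin.cases v φ : Fin (n + 2) → V) := by
    intro a b hab
    cases a using Fin.cases <;> cases b using Fin.cases <;>
      simp_all [eq_comm (a := v), φ.injective.eq_iff]
  refine ⟨⟨⟨Fin.cases v φ, hinj⟩, fun {a b} => ?_⟩, rfl⟩
  cases a using Fin.cases <;> cases b using Fin.cases <;>
    simp [hadj, G.adj_comm _ v, cycleGraph_adj_zero_succ, cycleGraph_adj_succ_succ,
      (cycleGraph _).adj_comm _ 0]

namespace Walk

variable {u v : V} {p : G.Walk u v}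

theorem dist_getVert_of_length_eq_dist (hp : p.length = G.dist u v) {i j : ℕ} (hij : i ≤ j)
    (hj : j ≤ p.length) : G.dist (p.getVert i) (p.getVert j) = j - i := by
  have hsub : ((p.take j).drop i).IsSubwalk p := (isSubwalk_drop _ _).trans (isSubwalk_take _ _)
  have hstart : (p.take j).getVert i = p.getVert i := by rw [take_getVert, min_eq_right hij]
  rw [← hstart, ← length_eq_dist_of_subwalk hp hsub, drop_length, take_length]
  omega

theorem adj_getVert_iff_of_length_eq_dist (hp : p.length = G.dist u v) {i j : ℕ}
    (hi : i ≤ p.length) (hj : j ≤ p.length) :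
    G.Adj (p.getVert i) (p.getVert j) ↔ i + 1 = j ∨ j + 1 = i := by
  rcases le_total i j with h | h
  · rw [← dist_eq_one_iff_adj, dist_getVert_of_length_eq_dist hp h hj]
    omega
  · rw [G.adj_comm, ← dist_eq_one_iff_adj, dist_getVert_of_length_eq_dist hp h hi]
    omega

theorem getVert_injOn_of_length_eq_dist (hp : p.length = G.dist u v) :
    Set.InjOn p.getVert {i | i ≤ p.length} := by
  intro i hi j hj hij
  rcases le_total i j with h | h
  · have := dist_getVert_of_length_eq_dist hp h hj
    rw [hij, dist_self] at this
    omega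
  · have := dist_getVert_of_length_eq_dist hp h hi
    rw [hij, dist_self] at this
    omega

def pathGraphEmbeddingOfLengthEqDist (p : G.Walk u v) (hp : p.length = G.dist u v) :
    pathGraph (p.length + 1) ↪g G where
  toFun i := p.getVert i
  inj' i j hij := Fin.ext <| getVert_injOn_of_length_eq_dist hp (Nat.lt_succ_iff.1 i.isLt)
    (Nat.lt_succ_iff.1 j.isLt) hij
  map_rel_iff' {i j} := by
    rw [pathGraph_adj]
    exact adj_getVert_iff_of_length_eq_dist hp (Nat.lt_succ_iff.1 i.isLt)
      (Nat.lt_succ_iff.1 j.isLt)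

end Walk

theorem exists_cycleGraph_embedding_of_reachable_induce {s : Set V} {v u₁ u₂ : V}
    (hu₁ : u₁ ∈ s) (hu₂ : u₂ ∈ s) (hv : v ∉ s) (hadj : ∀ x ∈ s, G.Adj v x ↔ x = u₁ ∨ x = u₂)
    (hr : (G.induce s).Reachable ⟨u₁, hu₁⟩ ⟨u₂, hu₂⟩) :
    ∃ f : cycleGraph ((G.induce s).dist ⟨u₁, hu₁⟩ ⟨u₂, hu₂⟩ + 2) ↪g G, f 0 = v := by
  obtain ⟨p, hp⟩ := hr.exists_walk_length_eq_dist
  let φ := (p.pathGraphEmbeddingOfLengthEqDist hp).trans (Embedding.induce s)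
  have hφs : ∀ i, φ i ∈ s := fun i => (p.getVert i).2
  have hφ0 : φ 0 = u₁ := congrArg Subtype.val p.getVert_zero
  have hφlast : φ (Fin.last _) = u₂ := congrArg Subtype.val p.getVert_length
  have hφadj : ∀ i, G.Adj v (φ i) ↔ i = 0 ∨ i = Fin.last _ := by
    intro i
    rw [hadj _ (hφs i), ← φ.injective.eq_iff (b := 0), ← φ.injective.eq_iff (b := Fin.last _),
      hφ0, hφlast]
  rw [← hp]
  exact exists_cycleGraph_embedding_of_pathGraph φ (fun ⟨i, hi⟩ => hv (hi ▸ hφs i)) hφadj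

end SimpleGraph

open SimpleGraph

/-- If a graph `G` contains a vertex `v` with two distinct nonadjacent neighbors
`u₁, u₂ ∈ N_G(v)`, together with a walk from `u₁` to `u₂` all of whose internal vertices
lie outside the closed neighborhood `N_G[v]`, then `G` contains a hole (an induced cycle
of length at least four, i.e. an embedded `n`-cycle with `n ≥ 4`) passing through `v`. -/
theorem hole_through_vertex_of_walk {α : Type} (G : SimpleGraph α) (v u₁ u₂ : α)
    (h₁ : G.Adj v u₁) (h₂ : G.Adj v u₂) (hne : u₁ ≠ u₂) (hnadj : ¬ G.Adj u₁ u₂)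
    (w : G.Walk u₁ u₂)
    (hint : ∀ x ∈ w.support, x ≠ u₁ → x ≠ u₂ → x ∉ insert v (G.neighborSet v)) :
    ∃ (n : ℕ) (_ : 4 ≤ n) (f : SimpleGraph.cycleGraph n ↪g G) (i : Fin n), f i = v := by
  let s : Set α := {x | x = u₁ ∨ x = u₂ ∨ x ∉ insert v (G.neighborSet v)}
  have hv : v ∉ s := by
    simp only [s, Set.mem_ofPred_eq, Set.mem_insert_iff, true_or, not_true_eq_false, or_false]
    exact fun h => h.elim h₁.ne h₂.ne
  have hadj : ∀ x ∈ s, G.Adj v x ↔ x = u₁ ∨ x = u₂ := by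
    rintro x (rfl | rfl | hx)
    · exact iff_of_true h₁ (Or.inl rfl)
    · exact iff_of_true h₂ (Or.inr rfl)
    · simp only [Set.mem_insert_iff, mem_neighborSet, not_or] at hx
      simp only [hx.2, false_iff]
      rintro (rfl | rfl)
      exacts [hx.2 h₁, hx.2 h₂]
  have hws : ∀ x ∈ w.support, x ∈ s := fun x hx => by
    have := hint x hx
    simp only [s, Set.mem_ofPred_eq]
    tauto
  have hr := (w.induce s hws).reachable
  have hdist := hr.one_lt_dist_of_ne_of_not_adj (by simpa using hne) hnadj
  obtain ⟨f, hf⟩ := exists_cycleGraph_embedding_of_reachable_induce _ _ hv hadj hr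
  exact ⟨_, by omega, f, 0, hf⟩
end

section
/- Let H be a hereditary graph class, let G be a graph, let A1 and A2 be disjoint vertex subsets of G, and let S1, S2 be families of subsets of A1 and A2 respectively that are A1-exhaustive and A2-exhaustive for H-deletion on G. Then for any set A′ containing A1 ∪ A2, the family S′ = { S1 ∪ S2 ∪ S* : S1 ∈ S1, S2 ∈ S2, S* ⊆ A′ \ (A1 ∪ A2) } is A′-exhaustive for H-deletion on G and has size at most |S1|·|S2|·2^{|A′ \ (A1 ∪ A2)|}. -/
/-- A graph class is hereditary if it is closed under taking induced subgraphs. -/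
def Hereditary (H : GraphClass) : Prop :=
  ∀ (V : Type) (G : SimpleGraph V) (s : Set V), H V G → H s (G.induce s)

/-- A family `F` of subsets of `A` is `A`-exhaustive for `H`-deletion on `G` if for every
minimum-size set `S ⊆ V(G)` with `G - S ∈ H` there exists `S_A ∈ F` such that the set
`S' := (S \ A) ∪ S_A` satisfies `|S'| ≤ |S|` and `G - S' ∈ H`. -/
def ExhaustiveFor (H : GraphClass) {V : Type} [Fintype V] (G : SimpleGraph V)
    (A : Set V) (F : Set (Set V)) : Prop :=
  (∀ s ∈ F, s ⊆ A) ∧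
  ∀ S : Set V, H _ (G.induce (Sᶜ : Set V)) →
    (∀ S'' : Set V, H _ (G.induce (S''ᶜ : Set V)) → S.ncard ≤ S''.ncard) →
    ∃ SA ∈ F, ((S \ A) ∪ SA).ncard ≤ S.ncard ∧
      H _ (G.induce ((((S \ A) ∪ SA)ᶜ : Set V)))

/-- The combined family `{ s₁ ∪ s₂ ∪ s* : s₁ ∈ F₁, s₂ ∈ F₂, s* ⊆ R }`. -/
def combineFam {V : Type} (F₁ F₂ : Set (Set V)) (R : Set V) : Set (Set V) :=
  {s : Set V | ∃ s₁ ∈ F₁, ∃ s₂ ∈ F₂, ∃ sstar : Set V, sstar ⊆ R ∧ s = s₁ ∪ s₂ ∪ sstar}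

/-!
Apply the exhaustiveness of `F₁` to a minimum solution `S`, then that of `F₂` to the minimum
solution `(S \ A₁) ∪ S₁` it produces. Because `A₁` and `A₂` are disjoint, the second
replacement does not undo the first, and the final solution agrees with `S` outside `A'` while
its trace on `A'` is `S₁ ∪ S₂ ∪ (S ∩ (A' \ (A₁ ∪ A₂)))`, a member of the combined family.
-/

def IsMinDeletionSet (H : GraphClass) {V : Type} (G : SimpleGraph V) (S : Set V) : Prop :=
  H _ (G.induce Sᶜ) ∧ ∀ S' : Set V, H _ (G.induce S'ᶜ) → S.ncard ≤ S'.ncard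

/-- Since `S` itself is a solution, `|S'| ≤ |S|` for a solution `S'` is the same as `S'` being
again of minimum size. -/
theorem exhaustiveFor_iff {H : GraphClass} {V : Type} [Fintype V] {G : SimpleGraph V}
    {A : Set V} {F : Set (Set V)} :
    ExhaustiveFor H G A F ↔ (∀ s ∈ F, s ⊆ A) ∧
      ∀ S, IsMinDeletionSet H G S → ∃ SA ∈ F, IsMinDeletionSet H G ((S \ A) ∪ SA) := by
  refine and_congr_right fun _ => forall_congr' fun S => ⟨fun h hS => ?_, fun h hS hmin => ?_⟩
  · obtain ⟨SA, hSA, hle, hH⟩ := h hS.1 hS.2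
    exact ⟨SA, hSA, hH, fun S' hS' => hle.trans (hS.2 S' hS')⟩
  · obtain ⟨SA, hSA, hH, hmin'⟩ := h ⟨hS, hmin⟩
    exact ⟨SA, hSA, hmin' S hS, hH⟩

theorem subset_of_mem_combineFam {V : Type} {F₁ F₂ : Set (Set V)} {A₁ A₂ : Set V}
    (hF₁ : ∀ s ∈ F₁, s ⊆ A₁) (hF₂ : ∀ s ∈ F₂, s ⊆ A₂) (R : Set V) :
    ∀ s ∈ combineFam F₁ F₂ R, s ⊆ A₁ ∪ A₂ ∪ R := by
  rintro _ ⟨s₁, hs₁, s₂, hs₂, sstar, hsstar, rfl⟩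
  exact Set.union_subset_union (Set.union_subset_union (hF₁ s₁ hs₁) (hF₂ s₂ hs₂)) hsstar

theorem combineFam_subset_image {V : Type} (F₁ F₂ : Set (Set V)) (R : Set V) :
    combineFam F₁ F₂ R ⊆
      (fun p : Set V × Set V × Set V => p.1 ∪ p.2.1 ∪ p.2.2) '' (F₁ ×ˢ F₂ ×ˢ 𝒫 R) := by
  rintro _ ⟨s₁, hs₁, s₂, hs₂, sstar, hsstar, rfl⟩
  exact ⟨(s₁, s₂, sstar), ⟨hs₁, hs₂, hsstar⟩, rfl⟩

theorem ncard_combineFam_le {V : Type} [Finite V] (F₁ F₂ : Set (Set V)) (R : Set V) :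
    (combineFam F₁ F₂ R).ncard ≤ F₁.ncard * F₂.ncard * 2 ^ R.ncard :=
  calc (combineFam F₁ F₂ R).ncard
      ≤ ((fun p : Set V × Set V × Set V => p.1 ∪ p.2.1 ∪ p.2.2) '' (F₁ ×ˢ F₂ ×ˢ 𝒫 R)).ncard :=
        Set.ncard_le_ncard (combineFam_subset_image F₁ F₂ R)
    _ ≤ (F₁ ×ˢ F₂ ×ˢ 𝒫 R).ncard := Set.ncard_image_le
    _ = F₁.ncard * F₂.ncard * 2 ^ R.ncard := by
        rw [Set.ncard_prod, Set.ncard_prod, Set.ncard_powerset, mul_assoc]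

/-- Replacing the part of `S` in `A'` by `S₁ ∪ S₂ ∪ (S ∩ (A' \ (A₁ ∪ A₂)))` amounts to
replacing its part in `A₁` by `S₁` and then the part in `A₂` by `S₂`. -/
theorem diff_union_combine_eq {V : Type} {S S₁ S₂ A₁ A₂ A' : Set V}
    (hS₁ : S₁ ⊆ A₁) (hS₂ : S₂ ⊆ A₂) (hdisj : Disjoint A₁ A₂) (hsub : A₁ ∪ A₂ ⊆ A') :
    (S \ A') ∪ (S₁ ∪ S₂ ∪ (S ∩ (A' \ (A₁ ∪ A₂)))) = (((S \ A₁) ∪ S₁) \ A₂) ∪ S₂ := by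
  ext x
  have : x ∈ A₁ → x ∉ A₂ := fun h => Set.disjoint_left.1 hdisj h
  have := @hS₁ x
  have := @hS₂ x
  have := @hsub x
  simp only [Set.mem_union, Set.mem_sdiff, Set.mem_inter_iff] at *
  tauto

theorem combine_exhaustive_families_general (H : GraphClass)
    {V : Type} [Fintype V] (G : SimpleGraph V)
    (A₁ A₂ A' : Set V) (hdisj : Disjoint A₁ A₂) (hsub : A₁ ∪ A₂ ⊆ A')
    (F₁ F₂ : Set (Set V))
    (h₁ : ExhaustiveFor H G A₁ F₁) (h₂ : ExhaustiveFor H G A₂ F₂) :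
    ExhaustiveFor H G A' (combineFam F₁ F₂ (A' \ (A₁ ∪ A₂))) ∧
    (combineFam F₁ F₂ (A' \ (A₁ ∪ A₂))).ncard ≤
      F₁.ncard * F₂.ncard * 2 ^ (A' \ (A₁ ∪ A₂)).ncard := by
  have hF := subset_of_mem_combineFam h₁.1 h₂.1 (A' \ (A₁ ∪ A₂))
  rw [Set.union_sdiff_cancel hsub] at hF
  refine ⟨exhaustiveFor_iff.2 ⟨hF, fun S hS => ?_⟩, ncard_combineFam_le _ _ _⟩
  obtain ⟨S₁, hS₁, hmin₁⟩ := (exhaustiveFor_iff.1 h₁).2 S hS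
  obtain ⟨S₂, hS₂, hmin₂⟩ := (exhaustiveFor_iff.1 h₂).2 _ hmin₁
  refine ⟨S₁ ∪ S₂ ∪ (S ∩ (A' \ (A₁ ∪ A₂))),
    ⟨S₁, hS₁, S₂, hS₂, _, Set.inter_subset_right, rfl⟩, ?_⟩
  rwa [diff_union_combine_eq (h₁.1 S₁ hS₁) (h₂.1 S₂ hS₂) hdisj hsub]

/-- Let `H` be a hereditary graph class, `A₁, A₂` disjoint vertex subsets of `G`, and
`F₁, F₂` families that are `A₁`- and `A₂`-exhaustive for `H`-deletion on `G`. Then for any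
set `A' ⊇ A₁ ∪ A₂`, the family `{ s₁ ∪ s₂ ∪ s* : s₁ ∈ F₁, s₂ ∈ F₂, s* ⊆ A' \ (A₁ ∪ A₂) }`
is `A'`-exhaustive for `H`-deletion on `G` and has size at most
`|F₁| ⋅ |F₂| ⋅ 2 ^ |A' \ (A₁ ∪ A₂)|`. -/
theorem combine_exhaustive_families (H : GraphClass) (hHer : Hereditary H)
    {V : Type} [Fintype V] (G : SimpleGraph V)
    (A₁ A₂ A' : Set V) (hdisj : Disjoint A₁ A₂) (hsub : A₁ ∪ A₂ ⊆ A')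
    (F₁ F₂ : Set (Set V))
    (h₁ : ExhaustiveFor H G A₁ F₁) (h₂ : ExhaustiveFor H G A₂ F₂) :
    ExhaustiveFor H G A' (combineFam F₁ F₂ (A' \ (A₁ ∪ A₂))) ∧
    (combineFam F₁ F₂ (A' \ (A₁ ∪ A₂))).ncard ≤
      F₁.ncard * F₂.ncard * 2 ^ (A' \ (A₁ ∪ A₂)).ncard :=
  combine_exhaustive_families_general H G A₁ A₂ A' hdisj hsub F₁ F₂ h₁ h₂
end

section
/- Let G be an interval graph with a normalized interval model, let F be a graph containing G as an induced subgraph such that every vertex of F outside G has no neighbor in G outside a fixed set X ⊆ V(G), and let P be a chordless path in F. Then the intervals spanned by the maximal subpaths of P inside G are pairwise disjoint; moreover, if P avoids the closed neighborhood of some vertex u of G, these intervals are all disjoint from the interval of u. -/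
/-! Two distinct maximal segments of a path inside `U` are separated by a vertex outside `U`,
so a vertex of one and a vertex of the other lie at distance at least two along the path and
are non-adjacent by chordlessness; in an interval model, distinct non-adjacent vertices have
disjoint intervals. -/

/-- `[a, b]` (with `a ≤ b ≤ length p`) is a maximal segment of the walk `p` inside the
vertex set `U`: all vertices `p.getVert i` for `a ≤ i ≤ b` lie in `U` and the segment
cannot be extended in either direction. -/
def MaxSeg {W : Type} {F : SimpleGraph W} (U : Set W) {s t : W} (p : F.Walk s t)
    (a b : ℕ) : Prop :=
  a ≤ b ∧ b ≤ p.length ∧ (∀ i : ℕ, a ≤ i → i ≤ b → p.getVert i ∈ U) ∧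
    (a = 0 ∨ p.getVert (a - 1) ∉ U) ∧ (b = p.length ∨ p.getVert (b + 1) ∉ U)

/-- The interval spanned by the segment `[a, b]` of the walk `p`: the union of the
intervals of its vertices. -/
def spanInterval {W : Type} {F : SimpleGraph W} (lp rp : W → ℝ) {s t : W}
    (p : F.Walk s t) (a b : ℕ) : Set ℝ :=
  ⋃ i ∈ Set.Icc a b, Set.Icc (lp (p.getVert i)) (rp (p.getVert i))

namespace MaxSeg

variable {W : Type} {F : SimpleGraph W} {U : Set W} {s t : W} {p : F.Walk s t} {a b c d i : ℕ}

theorem getVert_mem (h : MaxSeg U p a b) (hi : i ∈ Set.Icc a b) : p.getVert i ∈ U :=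
  h.2.2.1 i hi.1 hi.2

theorem le_length (h : MaxSeg U p a b) (hi : i ∈ Set.Icc a b) : i ≤ p.length :=
  hi.2.trans h.2.1

theorem le_and_le_of_touching (h : MaxSeg U p a b) (hd : d ≤ p.length)
    (hU : ∀ i, c ≤ i → i ≤ d → p.getVert i ∈ U) (hcb : c ≤ b + 1) (had : a ≤ d + 1) :
    a ≤ c ∧ d ≤ b := by
  obtain ⟨-, -, -, hleft, hright⟩ := h
  constructor
  · by_contra! hca
    exact hleft.elim (by omega) (· (hU (a - 1) (by omega) (by omega)))
  · by_contra! hbd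
    exact hright.elim (by omega) (· (hU (b + 1) (by omega) hbd))

theorem separated (h : MaxSeg U p a b) (h' : MaxSeg U p c d) (hne : (a, b) ≠ (c, d)) :
    b + 1 < c ∨ d + 1 < a := by
  by_contra! hnsep
  have ⟨hac, hdb⟩ := h.le_and_le_of_touching h'.2.1 h'.2.2.1 hnsep.1 hnsep.2
  have ⟨hca, hbd⟩ := h'.le_and_le_of_touching h.2.1 h.2.2.1 (by omega) (by omega)
  exact hne (by rw [le_antisymm hac hca, le_antisymm hbd hdb])

end MaxSeg

theorem maximal_subpath_intervals_disjoint_general {W : Type} (F : SimpleGraph W)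
    (U : Set W) (lp rp : W → ℝ)
    (hmodel : ∀ u ∈ U, ∀ v ∈ U, u ≠ v →
      (F.Adj u v ↔ (Set.Icc (lp u) (rp u) ∩ Set.Icc (lp v) (rp v)).Nonempty))
    {s t : W} (p : F.Walk s t) (hpath : p.IsPath)
    (hchordless : ∀ i j : ℕ, i ≤ p.length → j ≤ p.length →
      F.Adj (p.getVert i) (p.getVert j) → (i + 1 = j ∨ j + 1 = i)) :
    (∀ a b c d : ℕ, MaxSeg U p a b → MaxSeg U p c d → (a, b) ≠ (c, d) →
      Disjoint (spanInterval lp rp p a b) (spanInterval lp rp p c d)) ∧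
    (∀ u ∈ U, (∀ x ∈ p.support, x ≠ u ∧ ¬ F.Adj u x) →
      ∀ a b : ℕ, MaxSeg U p a b →
        Disjoint (spanInterval lp rp p a b) (Set.Icc (lp u) (rp u))) := by
  have disjoint_of_not_adj : ∀ v ∈ U, ∀ w ∈ U, v ≠ w → ¬F.Adj v w →
      Disjoint (Set.Icc (lp v) (rp v)) (Set.Icc (lp w) (rp w)) := fun v hv w hw hne hnadj =>
    Set.disjoint_iff_inter_eq_empty.2 <|
      Set.not_nonempty_iff_eq_empty.1 fun hx => hnadj ((hmodel v hv w hw hne).2 hx)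
  refine ⟨fun a b c d hab hcd hne => ?_, fun u hu havoid a b hab => ?_⟩
  · have hsep := hab.separated hcd hne
    refine Set.disjoint_iUnion₂_left.2 fun i hi => Set.disjoint_iUnion₂_right.2 fun j hj => ?_
    have hil := hab.le_length hi
    have hjl := hcd.le_length hj
    refine disjoint_of_not_adj _ (hab.getVert_mem hi) _ (hcd.getVert_mem hj)
      (fun heq => ?_) fun hadj => ?_
    · have := hpath.getVert_injOn hil hjl heq
      grind
    · have := hchordless i j hil hjl hadj
      grind
  · refine Set.disjoint_iUnion₂_left.2 fun i hi => ?_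
    obtain ⟨hne, hnadj⟩ := havoid _ (p.getVert_mem_support i)
    exact (disjoint_of_not_adj u hu _ (hab.getVert_mem hi) hne.symm hnadj).symm

/-- Let `G` be an interval graph with a normalized interval model, realized as the
subgraph of a graph `F` induced by a vertex set `U`, such that every vertex of `F`
outside `U` has no neighbor in `U` outside a fixed set `X ⊆ U`. Let `p` be a chordless
path in `F`. Then the intervals spanned by the maximal segments of `p` inside `U` are
pairwise disjoint; moreover, if `p` avoids the closed neighborhood of some vertex
`u ∈ U`, these intervals are all disjoint from the interval of `u`. -/
theorem maximal_subpath_intervals_disjoint {W : Type} (F : SimpleGraph W)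
    (U X : Set W) (hXU : X ⊆ U) (lp rp : W → ℝ)
    (hlt : ∀ v ∈ U, lp v < rp v)
    (hmodel : ∀ u ∈ U, ∀ v ∈ U, u ≠ v →
      (F.Adj u v ↔ (Set.Icc (lp u) (rp u) ∩ Set.Icc (lp v) (rp v)).Nonempty))
    (hnorm : ∀ u ∈ U, ∀ v ∈ U, u ≠ v → lp u ≠ lp v ∧ rp u ≠ rp v ∧ lp u ≠ rp v)
    (hbd : ∀ w : W, w ∉ U → ∀ v ∈ U, F.Adj w v → v ∈ X)
    {s t : W} (p : F.Walk s t) (hpath : p.IsPath)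
    (hchordless : ∀ i j : ℕ, i ≤ p.length → j ≤ p.length →
      F.Adj (p.getVert i) (p.getVert j) → (i + 1 = j ∨ j + 1 = i)) :
    (∀ a b c d : ℕ, MaxSeg U p a b → MaxSeg U p c d → (a, b) ≠ (c, d) →
      Disjoint (spanInterval lp rp p a b) (spanInterval lp rp p c d)) ∧
    (∀ u ∈ U, (∀ x ∈ p.support, x ≠ u ∧ ¬ F.Adj u x) →
      ∀ a b : ℕ, MaxSeg U p a b →
        Disjoint (spanInterval lp rp p a b) (Set.Icc (lp u) (rp u))) :=
  maximal_subpath_intervals_disjoint_general F U lp rp hmodel p hpath hchordless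
end
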